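/- arXiv:1402.2143 — 6 statements merged into one kernel-verified Lean document; each statement's English description precedes it below -/
import Mathlib

section
/- For any DMTS D over a finite alphabet Σ, D ≤m mc(D) and D ≡th mc(D), where mc(D) is the may-completion of D; in particular ⟦D⟧ = ⟦mc(D)⟧. -/
open Set

/-- A labeled transition system over alphabet `A` with state space `S`. -/
structure LTS (A : Type) (S : Type) where
  init : Set S
  trans : Set (S × A × S)

/-- A disjunctive modal transition system. -/
structure DMTS (A : Type) (S : Type) where
  init : Set S
  may : Set (S × A × S)
  must : Set (S × Set (A × S))

/-- The DMTS consistency condition: must-transitions are backed by may-transitions. -/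
def DMTS.Consistent {A S : Type} (D : DMTS A S) : Prop :=
  ∀ s N, (s, N) ∈ D.must → ∀ a t, (a, t) ∈ N → (s, a, t) ∈ D.may

/-- An LTS viewed as a DMTS implementation. -/
def LTS.toDMTS {A S : Type} (I : LTS A S) : DMTS A S :=
  ⟨I.init, I.trans, {p | ∃ a t, (p.1, a, t) ∈ I.trans ∧ p.2 = {(a, t)}}⟩

/-- `R` is a modal refinement between DMTS. -/
def IsDMTSRef {A S1 S2 : Type} (D1 : DMTS A S1) (D2 : DMTS A S2)
    (R : Set (S1 × S2)) : Prop :=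
  ∀ s1 s2, (s1, s2) ∈ R →
    (∀ a t1, (s1, a, t1) ∈ D1.may → ∃ t2, (s2, a, t2) ∈ D2.may ∧ (t1, t2) ∈ R) ∧
    (∀ N2, (s2, N2) ∈ D2.must → ∃ N1, (s1, N1) ∈ D1.must ∧
      ∀ a t1, (a, t1) ∈ N1 → ∃ t2, (a, t2) ∈ N2 ∧ (t1, t2) ∈ R)

/-- DMTS modal refinement `D1 ≤m D2`. -/
def DMTS.Refines {A S1 S2 : Type} (D1 : DMTS A S1) (D2 : DMTS A S2) : Prop :=
  ∃ R, IsDMTSRef D1 D2 R ∧ ∀ s1 ∈ D1.init, ∃ s2 ∈ D2.init, (s1, s2) ∈ R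

/-- An LTS `I` is an implementation of the DMTS `D`, i.e. `I ∈ ⟦D⟧`. -/
def DMTS.Sat {A S T : Type} (D : DMTS A S) (I : LTS A T) : Prop :=
  DMTS.Refines I.toDMTS D

/-- DMTS thorough refinement `D1 ≤th D2`, i.e. `⟦D1⟧ ⊆ ⟦D2⟧`. -/
def DMTS.ThRefines {A S1 S2 : Type} (D1 : DMTS A S1) (D2 : DMTS A S2) : Prop :=
  ∀ (T : Type) [Fintype T] (I : LTS A T), D1.Sat I → D2.Sat I

/-- The DMTS `D` with `s` as the only initial state. -/
def DMTS.atState {A S : Type} (D : DMTS A S) (s : S) : DMTS A S :=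
  ⟨{s}, D.may, D.must⟩

/-- Thorough refinement between states of a DMTS: `t' ≤th t`. -/
def DMTS.stateThLe {A S : Type} (D : DMTS A S) (t' t : S) : Prop :=
  (D.atState t').ThRefines (D.atState t)

/-- The may-completion `mc(D)` of a DMTS. -/
def DMTS.mc {A S : Type} (D : DMTS A S) : DMTS A S :=
  ⟨D.init, {p | ∃ t, (p.1, p.2.1, t) ∈ D.may ∧ D.stateThLe p.2.2 t}, D.must⟩

/-- A (non-deterministic) acceptance automaton. -/
structure AA (A : Type) (S : Type) where
  init : Set S
  Tran : S → Set (Set (A × S))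

/-- `R` is a modal refinement between transition-constraint assignments
(shared by acceptance automata and `L`-expressions). -/
def IsAARef {A S1 S2 : Type} (T1 : S1 → Set (Set (A × S1)))
    (T2 : S2 → Set (Set (A × S2))) (R : Set (S1 × S2)) : Prop :=
  ∀ s1 s2, (s1, s2) ∈ R → ∀ M1 ∈ T1 s1, ∃ M2 ∈ T2 s2,
    (∀ a t1, (a, t1) ∈ M1 → ∃ t2, (a, t2) ∈ M2 ∧ (t1, t2) ∈ R) ∧
    (∀ a t2, (a, t2) ∈ M2 → ∃ t1, (a, t1) ∈ M1 ∧ (t1, t2) ∈ R)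

/-- AA modal refinement `A1 ≤m A2`. -/
def AA.Refines {A S1 S2 : Type} (A1 : AA A S1) (A2 : AA A S2) : Prop :=
  ∃ R, IsAARef A1.Tran A2.Tran R ∧ ∀ s1 ∈ A1.init, ∃ s2 ∈ A2.init, (s1, s2) ∈ R

/-- An LTS viewed as an AA implementation. -/
def LTS.toAA {A S : Type} (I : LTS A S) : AA A S :=
  ⟨I.init, fun s => {{p | (s, p.1, p.2) ∈ I.trans}}⟩

/-- An LTS `I` is an implementation of the AA `Aut`, i.e. `I ∈ ⟦Aut⟧`. -/
def AA.Sat {A S T : Type} (Aut : AA A S) (I : LTS A T) : Prop :=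
  AA.Refines I.toAA Aut

/-- Formulae of the hybrid modal logic `L(X)`. -/
inductive LForm (A : Type) (X : Type) where
  | tt : LForm A X
  | ff : LForm A X
  | dia : A → X → LForm A X
  | neg : LForm A X → LForm A X
  | and : LForm A X → LForm A X → LForm A X

/-- Definable disjunction in `L(X)`. -/
def LForm.lor {A X : Type} (φ ψ : LForm A X) : LForm A X :=
  LForm.neg (LForm.and (LForm.neg φ) (LForm.neg ψ))

/-- Semantics of `L(X)`: a set of subsets of `A × X`. -/
def lsem {A X : Type} : LForm A X → Set (Set (A × X))
  | LForm.tt => Set.univ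
  | LForm.ff => ∅
  | LForm.dia a x => {M | (a, x) ∈ M}
  | LForm.neg φ => (lsem φ)ᶜ
  | LForm.and φ ψ => lsem φ ∩ lsem ψ

/-- An `L`-expression. -/
structure LExpr (A : Type) (X : Type) where
  init : Set X
  Phi : X → LForm A X

/-- Modal refinement of `L`-expressions `E1 ≤m E2`. -/
def LExpr.Refines {A X1 X2 : Type} (E1 : LExpr A X1) (E2 : LExpr A X2) : Prop :=
  ∃ R, IsAARef (fun x => lsem (E1.Phi x)) (fun x => lsem (E2.Phi x)) R ∧
    ∀ x1 ∈ E1.init, ∃ x2 ∈ E2.init, (x1, x2) ∈ R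

/-- An LTS `I` is an implementation of the `L`-expression `E`, i.e. `I ∈ ⟦E⟧`. -/
def LExpr.Sat {A X T : Type} (E : LExpr A X) (I : LTS A T) : Prop :=
  ∃ R, IsAARef (LTS.toAA I).Tran (fun x => lsem (E.Phi x)) R ∧
    ∀ s ∈ I.init, ∃ x ∈ E.init, (s, x) ∈ R

instance {α : Type} [Finite α] : Finite (Set α) :=
  Finite.of_equiv (α → Prop) (Equiv.refl _)

/-- An enumeration of a set over a finite type. -/
noncomputable def setList {α : Type} [Finite α] (s : Set α) : List α :=
  s.toFinite.toFinset.toList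

/-- Finite syntactic conjunction. -/
def listAnd {A X : Type} (l : List (LForm A X)) : LForm A X :=
  l.foldr LForm.and LForm.tt

/-- Finite syntactic disjunction. -/
def listOr {A X : Type} (l : List (LForm A X)) : LForm A X :=
  l.foldr LForm.lor LForm.ff

/-- The translation `bl` from acceptance automata to `L`-expressions:
`Φ(s) = ⋁_{M ∈ Tran(s)} ( ⋀_{(a,t)∈M} ⟨a⟩t ∧ ⋀_{(b,u)∉M} ¬⟨b⟩u )`. -/
noncomputable def bl {A S : Type} [Finite A] [Finite S] (Aut : AA A S) : LExpr A S :=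
  ⟨Aut.init, fun s => listOr ((setList (Aut.Tran s)).map fun M =>
    LForm.and
      (listAnd ((setList M).map fun p => LForm.dia p.1 p.2))
      (listAnd ((setList Mᶜ).map fun p => LForm.neg (LForm.dia p.1 p.2))))⟩

/-- The translation `lb` from `L`-expressions to acceptance automata. -/
def lb {A X : Type} (E : LExpr A X) : AA A X :=
  ⟨E.init, fun x => lsem (E.Phi x)⟩

/-- The translation `db` from DMTS to acceptance automata. -/
def db {A S : Type} (D : DMTS A S) : AA A S :=
  ⟨D.init, fun s => {M | (∀ a t, (a, t) ∈ M → (s, a, t) ∈ D.may) ∧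
      ∀ N, (s, N) ∈ D.must → (N ∩ M).Nonempty}⟩

/-- The state space of the translation `bd`. -/
def bdState {A S : Type} (Aut : AA A S) : Type :=
  {M : Set (A × S) // ∃ s, M ∈ Aut.Tran s}

/-- Must-transitions of `bd(Aut)`. -/
def bdMust {A S : Type} (Aut : AA A S) : Set (bdState Aut × Set (A × bdState Aut)) :=
  {p | ∃ a t, (a, t) ∈ p.1.val ∧ p.2 = {q | q.1 = a ∧ q.2.val ∈ Aut.Tran t}}

/-- The translation `bd` from acceptance automata to DMTS. -/
def bd {A S : Type} (Aut : AA A S) : DMTS A (bdState Aut) :=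
  ⟨{M | ∃ s ∈ Aut.init, M.val ∈ Aut.Tran s},
   {p | ∃ N, (p.1, N) ∈ bdMust Aut ∧ (p.2.1, p.2.2) ∈ N},
   bdMust Aut⟩

/-- Hennessy-Milner formulae `HML(X)`. -/
inductive HML (A : Type) (X : Type) where
  | tt : HML A X
  | ff : HML A X
  | var : X → HML A X
  | dia : A → HML A X → HML A X
  | box : A → HML A X → HML A X
  | and : HML A X → HML A X → HML A X
  | or : HML A X → HML A X → HML A X

/-- Semantics of `HML(X)` over an LTS, relative to an assignment. -/
def hsem {A X S : Type} (I : LTS A S) : HML A X → (X → Set S) → Set S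
  | HML.tt, _ => Set.univ
  | HML.ff, _ => ∅
  | HML.var x, σ => σ x
  | HML.dia a φ, σ => {s | ∃ s', (s, a, s') ∈ I.trans ∧ s' ∈ hsem I φ σ}
  | HML.box a φ, σ => {s | ∀ s', (s, a, s') ∈ I.trans → s' ∈ hsem I φ σ}
  | HML.and φ ψ, σ => hsem I φ σ ∩ hsem I ψ σ
  | HML.or φ ψ, σ => hsem I φ σ ∪ hsem I ψ σ

/-- The greatest (pre)fixed point semantics of a declaration `Δ`. -/
def hgfp {A X S : Type} (I : LTS A S) (Δ : X → HML A X) (x : X) : Set S :=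
  {s | ∃ σ : X → Set S, (∀ y, σ y ⊆ hsem I (Δ y) σ) ∧ s ∈ σ x}

/-- A ν-calculus expression. -/
structure NuExpr (A : Type) (X : Type) where
  init : Set X
  decl : X → HML A X

/-- `I ⊨ N` for a ν-calculus expression. -/
def NuExpr.Models {A X S : Type} (N : NuExpr A X) (I : LTS A S) : Prop :=
  ∀ s0 ∈ I.init, ∃ x0 ∈ N.init, s0 ∈ hgfp I N.decl x0

/-- A ν-calculus expression in normal form, given by its data `◇(x)` and `□ᵃ(x)`:
`Δ(x) = ⋀_{N∈◇(x)}(⋁_{(a,y)∈N} ⟨a⟩y) ∧ ⋀_{a}[a](⋁_{y∈□ᵃ(x)} y)`. -/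
structure NF (A : Type) (X : Type) where
  init : Set X
  dia : X → Set (Set (A × X))
  box : X → A → Set X

/-- Semantics of the normal-form formula `Δ(x)` relative to an assignment `σ`. -/
def nfSem {A X S : Type} (n : NF A X) (I : LTS A S) (σ : X → Set S) (x : X) : Set S :=
  {s | (∀ N ∈ n.dia x, ∃ p ∈ N, ∃ s', (s, p.1, s') ∈ I.trans ∧ s' ∈ σ p.2) ∧
       (∀ a s', (s, a, s') ∈ I.trans → ∃ y ∈ n.box x a, s' ∈ σ y)}

/-- The greatest (pre)fixed point semantics of a normal-form declaration. -/
def nfGfp {A X S : Type} (n : NF A X) (I : LTS A S) (x : X) : Set S :=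
  {s | ∃ σ : X → Set S, (∀ y, σ y ⊆ nfSem n I σ y) ∧ s ∈ σ x}

/-- `I ⊨ N` for a normal-form ν-calculus expression. -/
def NF.Models {A X S : Type} (n : NF A X) (I : LTS A S) : Prop :=
  ∀ s0 ∈ I.init, ∃ x0 ∈ n.init, s0 ∈ nfGfp n I x0

/-- Thorough refinement between variables of a normal-form expression: `x ≤th y`. -/
def NF.varThLe {A X : Type} (n : NF A X) (x y : X) : Prop :=
  ∀ (S : Type) [Fintype S] (I : LTS A S),
    NF.Models ⟨{x}, n.dia, n.box⟩ I → NF.Models ⟨{y}, n.dia, n.box⟩ I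

/-- `R` is a (ν-calculus) modal refinement between normal-form expressions. -/
def IsNFRef {A X1 X2 : Type} (n1 : NF A X1) (n2 : NF A X2)
    (R : Set (X1 × X2)) : Prop :=
  ∀ x1 x2, (x1, x2) ∈ R →
    (∀ a, ∀ y1 ∈ n1.box x1 a, ∃ y2 ∈ n2.box x2 a, (y1, y2) ∈ R) ∧
    (∀ N2 ∈ n2.dia x2, ∃ N1 ∈ n1.dia x1,
      ∀ a y1, (a, y1) ∈ N1 → ∃ y2, (a, y2) ∈ N2 ∧ (y1, y2) ∈ R)

/-- ν-calculus modal refinement `N1 ≤m N2` (normal forms). -/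
def NF.Refines {A X1 X2 : Type} (n1 : NF A X1) (n2 : NF A X2) : Prop :=
  ∃ R, IsNFRef n1 n2 R ∧ ∀ x1 ∈ n1.init, ∃ x2 ∈ n2.init, (x1, x2) ∈ R

/-- `R` is a modal-thorough refinement between normal-form expressions. -/
def IsNFMTRef {A X1 X2 : Type} (n1 : NF A X1) (n2 : NF A X2)
    (R : Set (X1 × X2)) : Prop :=
  ∀ x1 x2, (x1, x2) ∈ R →
    (∀ a, ∀ y1 ∈ n1.box x1 a, ∀ y1', n1.varThLe y1' y1 →
      ∃ y2 ∈ n2.box x2 a, ∃ y2', n2.varThLe y2' y2 ∧ (y1', y2') ∈ R) ∧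
    (∀ N2 ∈ n2.dia x2, ∃ N1 ∈ n1.dia x1,
      ∀ a y1, (a, y1) ∈ N1 → ∃ y2, (a, y2) ∈ N2 ∧ (y1, y2) ∈ R)

/-- ν-calculus modal-thorough refinement `N1 ≤mt N2`. -/
def NF.MTRefines {A X1 X2 : Type} (n1 : NF A X1) (n2 : NF A X2) : Prop :=
  ∃ R, IsNFMTRef n1 n2 R ∧ ∀ x1 ∈ n1.init, ∃ x2 ∈ n2.init, (x1, x2) ∈ R

/-- Mutual ν-calculus modal refinement `N1 ≡m N2`. -/
def NF.MEquiv {A X1 X2 : Type} (n1 : NF A X1) (n2 : NF A X2) : Prop :=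
  n1.Refines n2 ∧ n2.Refines n1

/-- The characteristic-formula translation `ddh` from DMTS to normal-form expressions. -/
def ddh {A S : Type} (D : DMTS A S) : NF A S :=
  ⟨D.init, fun s => {N | (s, N) ∈ D.must}, fun s a => {t | (s, a, t) ∈ D.may}⟩

/-- The (old) semantic translation `hdt` from normal-form expressions to DMTS. -/
def hdt {A X : Type} (n : NF A X) : DMTS A X :=
  ⟨n.init, {p | ∃ y ∈ n.box p.1 p.2.1, n.varThLe p.2.2 y}, {p | p.2 ∈ n.dia p.1}⟩

/-- The (new) syntactic translation `hd` from normal-form expressions to DMTS. -/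
def hd {A X : Type} (n : NF A X) : DMTS A X :=
  ⟨n.init, {p | p.2.2 ∈ n.box p.1 p.2.1}, {p | p.2 ∈ n.dia p.1}⟩

/-- The embedding of LTS into normal-form ν-calculus expressions. -/
def LTS.toNF {A S : Type} (I : LTS A S) : NF A S :=
  ⟨I.init, fun s => {M | ∃ a t, (s, a, t) ∈ I.trans ∧ M = {(a, t)}},
   fun s a => {t | (s, a, t) ∈ I.trans}⟩

/-- Disjunction of normal-form ν-calculus expressions (on disjoint variable sets). -/
def nfOr {A X1 X2 : Type} (n1 : NF A X1) (n2 : NF A X2) : NF A (X1 ⊕ X2) where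
  init := Sum.inl '' n1.init ∪ Sum.inr '' n2.init
  dia := fun x => match x with
    | Sum.inl x1 => (fun N => (fun p : A × X1 => (p.1, Sum.inl p.2)) '' N) '' n1.dia x1
    | Sum.inr x2 => (fun N => (fun p : A × X2 => (p.1, Sum.inr p.2)) '' N) '' n2.dia x2
  box := fun x a => match x with
    | Sum.inl x1 => Sum.inl '' n1.box x1 a
    | Sum.inr x2 => Sum.inr '' n2.box x2 a

/-- Conjunction of normal-form ν-calculus expressions. -/
def nfAnd {A X1 X2 : Type} (n1 : NF A X1) (n2 : NF A X2) : NF A (X1 × X2) where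
  init := n1.init ×ˢ n2.init
  dia := fun x =>
    {M | ∃ N1 ∈ n1.dia x.1, M = {p : A × (X1 × X2) |
      (p.1, p.2.1) ∈ N1 ∧ p.2.1 ∈ n1.box x.1 p.1 ∧ p.2.2 ∈ n2.box x.2 p.1}} ∪
    {M | ∃ N2 ∈ n2.dia x.2, M = {p : A × (X1 × X2) |
      (p.1, p.2.2) ∈ N2 ∧ p.2.1 ∈ n1.box x.1 p.1 ∧ p.2.2 ∈ n2.box x.2 p.1}}
  box := fun x a => (n1.box x.1 a) ×ˢ (n2.box x.2 a)

/-- The bottom normal-form expression `⊥ = (∅, ∅, ∅)`. -/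
def nfBot (A : Type) : NF A Empty :=
  ⟨∅, fun x => x.elim, fun x => x.elim⟩

/-- The top normal-form expression `⊤ = ({s}, {s}, Δ)` with `Δ(s) = tt`. -/
def nfTop (A : Type) : NF A Unit :=
  ⟨{()}, fun _ => ∅, fun _ _ => {()}⟩


/-!
The identity witnesses `D ≤m mc D` since `≤th` is reflexive, and composing refinements gives
`D ≤th mc D`. Conversely, let `Q` witness `I ≤m mc D` for a finite LTS `I`. As `I` and `D` are
finite, the greatest refinement of `I` by `D` is one of the approximants obtained by iterating
the refinement functional from the full relation, so it suffices to put `Q` into every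
approximant. For the `n`-th one, stack `n + 1` copies of `Q`: above level `0` the copy of
`(j, x)` has every transition `j →a j'` of `I`, matched through `Q` by some `x →a x'` of `mc D`,
leading to the copy of `(j', x')` one level down; level `0` keeps only the transitions matched
by `D` itself. By induction on the level the copy of `(j, x)` implements `D` at `x`: if
`x' ≤th t` with `x →a t` in `D`, the copy of `(j', x')` one level down implements `x'`, hence
`t`, because the stacked LTS is finite. The copy of `(j, x)` at level `n` unfolds `I` from `j`
for `n` steps, which puts `(j, x)` into the `n`-th approximant.
-/

theorem IsDMTSRef.comp {A S₁ S₂ S₃ : Type} {D₁ : DMTS A S₁} {D₂ : DMTS A S₂}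
    {D₃ : DMTS A S₃} {R₁₂ : Set (S₁ × S₂)} {R₂₃ : Set (S₂ × S₃)}
    (h₁₂ : IsDMTSRef D₁ D₂ R₁₂) (h₂₃ : IsDMTSRef D₂ D₃ R₂₃) :
    IsDMTSRef D₁ D₃ {p | ∃ s₂, (p.1, s₂) ∈ R₁₂ ∧ (s₂, p.2) ∈ R₂₃} := by
  rintro s₁ s₃ ⟨s₂, h₁, h₂⟩
  refine ⟨fun a t₁ ht₁ => ?_, fun N₃ hN₃ => ?_⟩
  · obtain ⟨t₂, ht₂, hr₁₂⟩ := (h₁₂ s₁ s₂ h₁).1 a t₁ ht₁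
    obtain ⟨t₃, ht₃, hr₂₃⟩ := (h₂₃ s₂ s₃ h₂).1 a t₂ ht₂
    exact ⟨t₃, ht₃, t₂, hr₁₂, hr₂₃⟩
  · obtain ⟨N₂, hN₂, hsim₂₃⟩ := (h₂₃ s₂ s₃ h₂).2 N₃ hN₃
    obtain ⟨N₁, hN₁, hsim₁₂⟩ := (h₁₂ s₁ s₂ h₁).2 N₂ hN₂
    refine ⟨N₁, hN₁, fun a t₁ h => ?_⟩
    obtain ⟨t₂, ht₂, hr₁₂⟩ := hsim₁₂ a t₁ h
    obtain ⟨t₃, ht₃, hr₂₃⟩ := hsim₂₃ a t₂ ht₂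
    exact ⟨t₃, ht₃, t₂, hr₁₂, hr₂₃⟩

namespace DMTS

section RefinementFunctional

variable {A S₁ S₂ : Type}

theorem Refines.trans {S₃ : Type} {D₁ : DMTS A S₁} {D₂ : DMTS A S₂} {D₃ : DMTS A S₃}
    (h₁₂ : D₁.Refines D₂) (h₂₃ : D₂.Refines D₃) : D₁.Refines D₃ := by
  obtain ⟨R₁₂, hR₁₂, hinit₁₂⟩ := h₁₂
  obtain ⟨R₂₃, hR₂₃, hinit₂₃⟩ := h₂₃
  refine ⟨_, hR₁₂.comp hR₂₃, fun s₁ hs₁ => ?_⟩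
  obtain ⟨s₂, hs₂, h₁⟩ := hinit₁₂ s₁ hs₁
  obtain ⟨s₃, hs₃, h₂⟩ := hinit₂₃ s₂ hs₂
  exact ⟨s₃, hs₃, s₂, h₁, h₂⟩

def refStep (D₁ : DMTS A S₁) (D₂ : DMTS A S₂) : Set (S₁ × S₂) →o Set (S₁ × S₂) where
  toFun R := {p |
    (∀ a t₁, (p.1, a, t₁) ∈ D₁.may → ∃ t₂, (p.2, a, t₂) ∈ D₂.may ∧ (t₁, t₂) ∈ R) ∧
    (∀ N₂, (p.2, N₂) ∈ D₂.must → ∃ N₁, (p.1, N₁) ∈ D₁.must ∧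
      ∀ a t₁, (a, t₁) ∈ N₁ → ∃ t₂, (a, t₂) ∈ N₂ ∧ (t₁, t₂) ∈ R)}
  monotone' R R' hR p := by
    rintro ⟨hmay, hmust⟩
    refine ⟨fun a t₁ h => ?_, fun N₂ h => ?_⟩
    · obtain ⟨t₂, ht₂, hR₂⟩ := hmay a t₁ h
      exact ⟨t₂, ht₂, hR hR₂⟩
    · obtain ⟨N₁, hN₁, hsim⟩ := hmust N₂ h
      refine ⟨N₁, hN₁, fun a t₁ h₁ => ?_⟩
      obtain ⟨t₂, ht₂, hR₂⟩ := hsim a t₁ h₁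
      exact ⟨t₂, ht₂, hR hR₂⟩

theorem isDMTSRef_iff_subset_refStep {D₁ : DMTS A S₁} {D₂ : DMTS A S₂}
    {R : Set (S₁ × S₂)} : IsDMTSRef D₁ D₂ R ↔ R ⊆ refStep D₁ D₂ R :=
  ⟨fun h p hp => h p.1 p.2 hp, fun h _ _ hs => h hs⟩

def maxRef (D₁ : DMTS A S₁) (D₂ : DMTS A S₂) : Set (S₁ × S₂) :=
  OrderHom.gfp (refStep D₁ D₂)

theorem refStep_maxRef (D₁ : DMTS A S₁) (D₂ : DMTS A S₂) :
    refStep D₁ D₂ (maxRef D₁ D₂) = maxRef D₁ D₂ :=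
  OrderHom.map_gfp _

theorem isDMTSRef_maxRef (D₁ : DMTS A S₁) (D₂ : DMTS A S₂) :
    IsDMTSRef D₁ D₂ (maxRef D₁ D₂) :=
  isDMTSRef_iff_subset_refStep.2 (refStep_maxRef D₁ D₂).ge

theorem subset_maxRef_of_isDMTSRef {D₁ : DMTS A S₁} {D₂ : DMTS A S₂} {R : Set (S₁ × S₂)}
    (h : IsDMTSRef D₁ D₂ R) : R ⊆ maxRef D₁ D₂ :=
  OrderHom.le_gfp _ (isDMTSRef_iff_subset_refStep.1 h)

def refApprox (D₁ : DMTS A S₁) (D₂ : DMTS A S₂) (n : ℕ) : Set (S₁ × S₂) :=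
  (refStep D₁ D₂)^[n] univ

theorem refApprox_succ (D₁ : DMTS A S₁) (D₂ : DMTS A S₂) (n : ℕ) :
    refApprox D₁ D₂ (n + 1) = refStep D₁ D₂ (refApprox D₁ D₂ n) :=
  Function.iterate_succ_apply' _ n univ

theorem exists_refApprox_subset_maxRef [Finite S₁] [Finite S₂]
    (D₁ : DMTS A S₁) (D₂ : DMTS A S₂) : ∃ n, refApprox D₁ D₂ n ⊆ maxRef D₁ D₂ := by
  have hanti : Antitone (refApprox D₁ D₂) :=
    (refStep D₁ D₂).monotone.antitone_iterate_of_map_le (subset_univ _)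
  obtain ⟨n, hn⟩ := WellFoundedLT.antitone_chain_condition hanti
  refine ⟨n, OrderHom.le_gfp _ ?_⟩
  rw [← refApprox_succ, ← hn (n + 1) n.le_succ]

end RefinementFunctional

variable {A S T : Type}

theorem stateThLe_refl (D : DMTS A S) (s : S) : D.stateThLe s s :=
  fun _ _ _ h => h

theorem refines_mc (D : DMTS A S) : D.Refines D.mc := by
  refine ⟨{p | p.1 = p.2}, ?_, fun s hs => ⟨s, hs, rfl⟩⟩
  rintro s _ (rfl : s = _)
  exact ⟨fun a t ht => ⟨t, ⟨t, ht, stateThLe_refl D t⟩, rfl⟩,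
    fun N hN => ⟨N, hN, fun a t ht => ⟨t, ht, rfl⟩⟩⟩

theorem thRefines_mc (D : DMTS A S) : D.ThRefines D.mc :=
  fun _ _ _ hI => hI.trans (refines_mc D)

section Implementations

variable {D : DMTS A S} {I : LTS A T}

theorem mem_refStep_toDMTS_iff {R : Set (T × S)} {j : T} {x : S} :
    (j, x) ∈ refStep I.toDMTS D R ↔
      (∀ a j', (j, a, j') ∈ I.trans → ∃ x', (x, a, x') ∈ D.may ∧ (j', x') ∈ R) ∧
      (∀ N, (x, N) ∈ D.must →
        ∃ a j' x', (j, a, j') ∈ I.trans ∧ (a, x') ∈ N ∧ (j', x') ∈ R) := by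
  refine and_congr Iff.rfl ⟨fun h N hN => ?_, fun h N hN => ?_⟩
  · obtain ⟨_, ⟨a, j', hj', rfl⟩, hsim⟩ := h N hN
    obtain ⟨x', hx', hR⟩ := hsim a j' rfl
    exact ⟨a, j', x', hj', hx', hR⟩
  · obtain ⟨a, j', x', hj', hx', hR⟩ := h N hN
    refine ⟨{(a, j')}, ⟨a, j', hj', rfl⟩, fun b t hbt => ?_⟩
    obtain ⟨rfl, rfl⟩ := Prod.mk.inj hbt
    exact ⟨x', hx', hR⟩

theorem sat_atState_pointed_iff {m : T} {w : S} :
    (D.atState w).Sat (LTS.mk {m} I.trans) ↔ (m, w) ∈ maxRef I.toDMTS D := by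
  refine ⟨fun ⟨R, hR, hinit⟩ => ?_, fun h => ⟨_, isDMTSRef_maxRef _ _, ?_⟩⟩
  · obtain ⟨_, rfl, hmw⟩ := hinit m rfl
    exact subset_maxRef_of_isDMTSRef (D₁ := I.toDMTS) (D₂ := D) hR hmw
  · rintro _ rfl
    exact ⟨w, rfl, h⟩

theorem mem_maxRef_of_stateThLe [Fintype T] {m : T} {y w : S} (hle : D.stateThLe y w)
    (h : (m, y) ∈ maxRef I.toDMTS D) : (m, w) ∈ maxRef I.toDMTS D :=
  sat_atState_pointed_iff.1 (hle T _ (sat_atState_pointed_iff.2 h))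

theorem mem_refApprox_of_depthBisim {TM : Type} {M : LTS A TM} (π : TM → T)
    (depth : TM → ℕ)
    (hproj : ∀ m a m', (m, a, m') ∈ M.trans →
      (π m, a, π m') ∈ I.trans ∧ depth m ≤ depth m' + 1)
    (hlift : ∀ m a i', depth m ≠ 0 → (π m, a, i') ∈ I.trans →
      ∃ m', (m, a, m') ∈ M.trans ∧ π m' = i') :
    ∀ k m w, k ≤ depth m → (m, w) ∈ maxRef M.toDMTS D →
      (π m, w) ∈ refApprox I.toDMTS D k := by
  intro k
  induction k with
  | zero => exact fun _ _ _ _ => mem_univ _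
  | succ k ih =>
    intro m w hk hmw
    rw [← refStep_maxRef, mem_refStep_toDMTS_iff] at hmw
    rw [refApprox_succ, mem_refStep_toDMTS_iff]
    refine ⟨fun a i' hi' => ?_, fun N hN => ?_⟩
    · obtain ⟨m', hm', rfl⟩ := hlift m a i' (by omega) hi'
      obtain ⟨w', hw', hmw'⟩ := hmw.1 a m' hm'
      exact ⟨w', hw', ih m' w' (by have := (hproj m a m' hm').2; omega) hmw'⟩
    · obtain ⟨a, m', w', hm', hw', hmw'⟩ := hmw.2 N hN
      obtain ⟨hi', hdepth⟩ := hproj m a m' hm'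
      exact ⟨a, π m', w', hi', hw', ih m' w' (by omega) hmw'⟩

end Implementations

section Layered

def layered (D : DMTS A S) (I : LTS A T) (Q : Set (T × S)) (n : ℕ) :
    LTS A (Q × Fin (n + 1)) where
  init := ∅
  trans := {e | match e with
    | ((q, k), a, (q', k')) => (q.1.1, a, q'.1.1) ∈ I.trans ∧
      ((k.val = 0 ∧ k'.val = 0 ∧ (q.1.2, a, q'.1.2) ∈ D.may) ∨
        (k.val = k'.val + 1 ∧ (q.1.2, a, q'.1.2) ∈ D.mc.may))}

variable {D : DMTS A S} {I : LTS A T} {Q : Set (T × S)} {n : ℕ}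

theorem mem_layered_trans {q q' : Q} {k k' : Fin (n + 1)} {a : A} :
    ((q, k), a, (q', k')) ∈ (layered D I Q n).trans ↔ (q.1.1, a, q'.1.1) ∈ I.trans ∧
      ((k.val = 0 ∧ k'.val = 0 ∧ (q.1.2, a, q'.1.2) ∈ D.may) ∨
        (k.val = k'.val + 1 ∧ (q.1.2, a, q'.1.2) ∈ D.mc.may)) :=
  Iff.rfl

theorem layered_must (hc : D.Consistent) (hQ : IsDMTSRef I.toDMTS D.mc Q) {q : Q}
    {k : Fin (n + 1)} {R : Set ((Q × Fin (n + 1)) × S)}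
    (hR : ∀ q' : Q, ((q', ⟨k - 1, by omega⟩), q'.1.2) ∈ R) :
    ∀ N, (q.1.2, N) ∈ D.must → ∃ a m' x',
      ((q, k), a, m') ∈ (layered D I Q n).trans ∧ (a, x') ∈ N ∧ (m', x') ∈ R := by
  intro N hN
  obtain ⟨a, i', y', hi', hy', hq'⟩ := (mem_refStep_toDMTS_iff.1 (hQ _ _ q.2)).2 N hN
  refine ⟨a, (⟨(i', y'), hq'⟩, ⟨k - 1, by omega⟩), y', mem_layered_trans.2 ⟨hi', ?_⟩, hy',
    hR ⟨_, hq'⟩⟩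
  have hmay : (q.1.2, a, y') ∈ D.may := hc _ N hN a y' hy'
  by_cases hk : k.val = 0
  · exact Or.inl ⟨hk, by simp [hk], hmay⟩
  · exact Or.inr ⟨by simp only; omega, y', hmay, stateThLe_refl D y'⟩

theorem layered_sat [Finite T] [Finite S] (hc : D.Consistent)
    (hQ : IsDMTSRef I.toDMTS D.mc Q) (k : Fin (n + 1)) (q : Q) :
    ((q, k), q.1.2) ∈ maxRef (layered D I Q n).toDMTS D := by
  obtain ⟨k, hk⟩ := k
  induction k generalizing q with
  | zero =>
    let R₀ : Set ((Q × Fin (n + 1)) × S) := {p | p.1.2.val = 0 ∧ p.2 = p.1.1.1.2}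
    have hR₀ : IsDMTSRef (layered D I Q n).toDMTS D R₀ := by
      rintro ⟨q, k⟩ y ⟨hk, hy⟩
      obtain rfl : y = q.1.2 := hy
      refine mem_refStep_toDMTS_iff.2 ⟨fun a ⟨q', k'⟩ hm' => ?_, layered_must hc hQ fun q' => ?_⟩
      · obtain ⟨-, ⟨-, hk', hmay⟩ | ⟨hk', -⟩⟩ := mem_layered_trans.1 hm'
        · exact ⟨_, hmay, hk', rfl⟩
        · simp only at hk; omega
      · exact ⟨by simp only at hk ⊢; omega, rfl⟩
    exact subset_maxRef_of_isDMTSRef hR₀ ⟨rfl, rfl⟩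
  | succ k ih =>
    have := Fintype.ofFinite (Q × Fin (n + 1))
    rw [← refStep_maxRef, mem_refStep_toDMTS_iff]
    refine ⟨fun a ⟨q', ⟨k', hk'⟩⟩ hm' => ?_, layered_must hc hQ fun q' => ih q' (by omega)⟩
    obtain ⟨-, ⟨hk₀, -⟩ | ⟨hkk', w, hw, hle⟩⟩ := mem_layered_trans.1 hm'
    · simp at hk₀
    · obtain rfl : k = k' := by simpa using hkk'
      exact ⟨w, hw, mem_maxRef_of_stateThLe hle (ih q' hk')⟩

theorem subset_refApprox_of_isDMTSRef_mc [Finite T] [Finite S] (hc : D.Consistent)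
    (hQ : IsDMTSRef I.toDMTS D.mc Q) (n : ℕ) : Q ⊆ refApprox I.toDMTS D n := by
  rintro ⟨j, x⟩ hjx
  refine mem_refApprox_of_depthBisim (M := layered D I Q n) (fun m => m.1.1.1)
    (fun m => m.2.val) ?_ ?_ n (⟨_, hjx⟩, Fin.last n) x (by simp)
    (layered_sat hc hQ (Fin.last n) ⟨_, hjx⟩)
  · rintro ⟨q, k⟩ a ⟨q', k'⟩ hm
    obtain ⟨hi, ⟨hk, hk', -⟩ | ⟨hkk', -⟩⟩ := mem_layered_trans.1 hm
    · exact ⟨hi, by dsimp only; omega⟩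
    · exact ⟨hi, by dsimp only; omega⟩
  · rintro ⟨⟨⟨i, y⟩, hq⟩, k⟩ a i' hk hi'
    obtain ⟨y', hy', hq'⟩ := (hQ i y hq).1 a i' hi'
    exact ⟨(⟨(i', y'), hq'⟩, ⟨k - 1, by omega⟩), mem_layered_trans.2
      ⟨hi', Or.inr ⟨by simp only at hk ⊢; omega, hy'⟩⟩, rfl⟩

end Layered

theorem mc_thRefines [Finite S] {D : DMTS A S} (hc : D.Consistent) : D.mc.ThRefines D := by
  intro T _ I ⟨Q, hQ, hinit⟩
  obtain ⟨n, hn⟩ := exists_refApprox_subset_maxRef I.toDMTS D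
  refine ⟨maxRef I.toDMTS D, isDMTSRef_maxRef _ _, fun j hj => ?_⟩
  obtain ⟨x, hx, hjx⟩ := hinit j hj
  exact ⟨x, hx, hn (subset_refApprox_of_isDMTSRef_mc hc hQ n hjx)⟩

end DMTS

theorem may_completion_spec_general {A : Type} {S : Type} [Fintype S]
    (D : DMTS A S) (hc : D.Consistent) :
    D.Refines D.mc ∧ D.ThRefines D.mc ∧ D.mc.ThRefines D ∧
      ∀ (T : Type) [Fintype T] (I : LTS A T), D.Sat I ↔ D.mc.Sat I :=
  ⟨D.refines_mc, D.thRefines_mc, DMTS.mc_thRefines hc,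
    fun T _ I => ⟨D.thRefines_mc T I, DMTS.mc_thRefines hc T I⟩⟩

/-- For any DMTS `D`, `D ≤m mc(D)` and `D ≡th mc(D)`;
in particular `⟦D⟧ = ⟦mc(D)⟧`. -/
theorem may_completion_spec {A : Type} [Fintype A] {S : Type} [Fintype S]
    (D : DMTS A S) (hc : D.Consistent) :
    D.Refines D.mc ∧ D.ThRefines D.mc ∧ D.mc.ThRefines D ∧
      ∀ (T : Type) [Fintype T] (I : LTS A T), D.Sat I ↔ D.mc.Sat I :=
  may_completion_spec_general D hc
end

section
/- Let Σ = {a1,…,an} be a finite alphabet of size n. There exists an acceptance automaton A with a single state (namely A = ({s⁰},{s⁰},Tran) with Tran(s⁰) = {M ⊆ Σ×{s⁰} : |M| is even}) such that every DMTS D with ⟦D⟧ = ⟦A⟧ has at least 2^(n−1) states. -/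
open Set

/-!
Every one-state loop LTS whose label set `E` has even size implements the even-cardinality
automaton, so it refines `D` from some initial state `t_E`. If `t_E = t_F` with `a₀ ∈ E \ F`,
the LTS whose root has an `a₀`-edge into the `E`-loop and `F`-edges into the `F`-loop also
refines `D` from that state (the must-transitions of `t_F` are answered by the `F`-edges),
yet its root enables the odd set `{a₀} ∪ F`. Hence `E ↦ t_E` is
injective on the `2 ^ (n - 1)` even subsets of `Σ`.
-/

section

variable {A U T : Type}

theorem LTS.isDMTSRef_toDMTS_iff (I : LTS A U) (D : DMTS A T) (R : Set (U × T)) :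
    IsDMTSRef I.toDMTS D R ↔ ∀ s t, (s, t) ∈ R →
      (∀ a s', (s, a, s') ∈ I.trans → ∃ t', (t, a, t') ∈ D.may ∧ (s', t') ∈ R) ∧
      ∀ N, (t, N) ∈ D.must → ∃ a s' t', (s, a, s') ∈ I.trans ∧ (a, t') ∈ N ∧ (s', t') ∈ R := by
  refine forall₂_congr fun s t => imp_congr_right fun _ => and_congr_right fun _ =>
    forall₂_congr fun N _ => ⟨?_, ?_⟩
  · rintro ⟨_, ⟨a, s', htr, rfl⟩, hmatch⟩
    obtain ⟨t', hN, hR⟩ := hmatch a s' rfl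
    exact ⟨a, s', t', htr, hN, hR⟩
  · rintro ⟨a, s', t', htr, hN, hR⟩
    refine ⟨{(a, s')}, ⟨a, s', htr, rfl⟩, ?_⟩
    rintro b u ⟨⟩
    exact ⟨t', hN, hR⟩

def loopLTS (E : Set A) : LTS A Unit := ⟨{()}, {p | p.2.1 ∈ E}⟩

/-- `P` is a set of states of `D` each of which is refined by the loop on `E`, with `P`
itself as the refinement relation. -/
def DMTS.LoopClosed (D : DMTS A T) (E : Set A) (P : Set T) : Prop :=
  ∀ t ∈ P, (∀ a ∈ E, ∃ t' ∈ P, (t, a, t') ∈ D.may) ∧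
    ∀ N, (t, N) ∈ D.must → ∃ a ∈ E, ∃ t' ∈ P, (a, t') ∈ N

theorem DMTS.Sat.exists_loopClosed {D : DMTS A T} {E : Set A} (h : D.Sat (loopLTS E)) :
    ∃ t ∈ D.init, ∃ P, t ∈ P ∧ D.LoopClosed E P := by
  obtain ⟨R, hR, hinit⟩ := h
  obtain ⟨t, ht, htR⟩ := hinit () rfl
  refine ⟨t, ht, {t | ((), t) ∈ R}, htR, fun u hu => ?_⟩
  obtain ⟨hmay, hmust⟩ := (LTS.isDMTSRef_toDMTS_iff _ D R).1 hR () u hu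
  refine ⟨fun a ha => ?_, fun N hN => ?_⟩
  · obtain ⟨t', htr, hR'⟩ := hmay a () ha
    exact ⟨t', hR', htr⟩
  · obtain ⟨a, _, t', ha, hN, hR'⟩ := hmust N hN
    exact ⟨a, ha, t', hR', hN⟩

def branchLTS (E F : Set A) (a₀ : A) : LTS A (Fin 3) :=
  ⟨{0}, {p | (p.1 = 0 ∧ p.2.1 = a₀ ∧ p.2.2 = 1) ∨ (p.1 = 0 ∧ p.2.1 ∈ F ∧ p.2.2 = 2) ∨
        (p.1 = 1 ∧ p.2.1 ∈ E ∧ p.2.2 = 1) ∨ (p.1 = 2 ∧ p.2.1 ∈ F ∧ p.2.2 = 2)}⟩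

theorem branchLTS_enabled_root (E F : Set A) (a₀ : A) :
    {a | ∃ s', (0, a, s') ∈ (branchLTS E F a₀).trans} = insert a₀ F := by
  ext a
  simp [branchLTS, exists_or]

theorem DMTS.sat_branchLTS {D : DMTS A T} {E F : Set A} {a₀ : A} {t : T} {PE PF : Set T}
    (ht : t ∈ D.init) (hE : D.LoopClosed E PE) (hF : D.LoopClosed F PF) (htE : t ∈ PE)
    (htF : t ∈ PF) (ha₀ : a₀ ∈ E) : D.Sat (branchLTS E F a₀) := by
  refine ⟨{q | q.1 = 0 ∧ q.2 = t ∨ q.1 = 1 ∧ q.2 ∈ PE ∨ q.1 = 2 ∧ q.2 ∈ PF},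
    (LTS.isDMTSRef_toDMTS_iff _ D _).2 ?_, fun s hs => ⟨t, ht, Or.inl ⟨hs, rfl⟩⟩⟩
  rintro s u (⟨rfl, rfl⟩ | ⟨rfl, hu⟩ | ⟨rfl, hu⟩)
  · refine ⟨?_, fun N hN => ?_⟩
    · rintro a s' (⟨-, rfl, rfl⟩ | ⟨-, ha, rfl⟩ | ⟨h, -⟩ | ⟨h, -⟩)
      · obtain ⟨t', ht', htr⟩ := (hE u htE).1 a ha₀
        exact ⟨t', htr, by simp [ht']⟩
      · obtain ⟨t', ht', htr⟩ := (hF u htF).1 a ha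
        exact ⟨t', htr, by simp [ht']⟩
      all_goals simp at h
    · obtain ⟨a, ha, t', ht', hN'⟩ := (hF u htF).2 N hN
      exact ⟨a, 2, t', by simp [branchLTS, ha], hN', by simp [ht']⟩
  · refine ⟨?_, fun N hN => ?_⟩
    · rintro a s' (⟨h, -⟩ | ⟨h, -⟩ | ⟨-, ha, rfl⟩ | ⟨h, -⟩)
      any_goals simp at h
      obtain ⟨t', ht', htr⟩ := (hE u hu).1 a ha
      exact ⟨t', htr, by simp [ht']⟩
    · obtain ⟨a, ha, t', ht', hN'⟩ := (hE u hu).2 N hN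
      exact ⟨a, 1, t', by simp [branchLTS, ha], hN', by simp [ht']⟩
  · refine ⟨?_, fun N hN => ?_⟩
    · rintro a s' (⟨h, -⟩ | ⟨h, -⟩ | ⟨h, -⟩ | ⟨-, ha, rfl⟩)
      any_goals simp at h
      obtain ⟨t', ht', htr⟩ := (hF u hu).1 a ha
      exact ⟨t', htr, by simp [ht']⟩
    · obtain ⟨a, ha, t', ht', hN'⟩ := (hF u hu).2 N hN
      exact ⟨a, 2, t', by simp [branchLTS, ha], hN', by simp [ht']⟩

def evenAA (A : Type) : AA A Unit := ⟨{()}, fun _ => {M : Set (A × Unit) | Even M.ncard}⟩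

theorem ncard_setOf_fst_mem (S : Set A) : {p : A × Unit | p.1 ∈ S}.ncard = S.ncard := by
  refine Set.ncard_preimage_of_injective_subset_range (fun p q h => Prod.ext h rfl) ?_
  exact fun a _ => ⟨(a, ()), rfl⟩

theorem evenAA_sat_loopLTS {E : Set A} (hE : Even E.ncard) : (evenAA A).Sat (loopLTS E) := by
  refine ⟨Set.univ, fun _ _ _ M hM => ⟨M, ?_, fun a u h => ⟨u, h, trivial⟩,
    fun a u h => ⟨u, h, trivial⟩⟩, fun _ _ => ⟨(), rfl, trivial⟩⟩
  obtain rfl := Set.mem_singleton_iff.1 hM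
  show Even {p : A × Unit | p.1 ∈ E}.ncard
  rwa [ncard_setOf_fst_mem]

theorem AA.Sat.even_ncard_enabled {I : LTS A U} (h : (evenAA A).Sat I) {s : U}
    (hs : s ∈ I.init) : Even {a | ∃ s', (s, a, s') ∈ I.trans}.ncard := by
  obtain ⟨R, hR, hinit⟩ := h
  obtain ⟨x, -, hx⟩ := hinit s hs
  obtain ⟨M, hM, hfwd, hbwd⟩ := hR s x hx _ rfl
  have : M = {p | p.1 ∈ {a | ∃ s', (s, a, s') ∈ I.trans}} := by
    ext ⟨a, u⟩
    exact ⟨fun hm => (hbwd a u hm).imp fun _ h => h.1,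
      fun ⟨s', hs'⟩ => by obtain ⟨_, hm, -⟩ := hfwd a s' hs'; exact hm⟩
  rw [← ncard_setOf_fst_mem, ← this]
  exact hM

theorem DMTS.subset_of_loopClosed [Finite A] {D : DMTS A T}
    (hsound : ∀ (U : Type) [Fintype U] (I : LTS A U), D.Sat I → (evenAA A).Sat I)
    {E F : Set A} {t : T} {PE PF : Set T} (ht : t ∈ D.init) (hE : D.LoopClosed E PE)
    (hF : D.LoopClosed F PF) (htE : t ∈ PE) (htF : t ∈ PF) (hFeven : Even F.ncard) :
    E ⊆ F := by
  intro a₀ ha₀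
  by_contra haF
  have h := (hsound _ _ (D.sat_branchLTS ht hE hF htE htF ha₀)).even_ncard_enabled rfl
  rw [branchLTS_enabled_root, Set.ncard_insert_of_notMem haF] at h
  exact Nat.not_even_iff_odd.2 hFeven.add_one h

theorem exists_even_ncard_preimage_val [Finite A] (a₀ : A) (S : Set {a // a ≠ a₀}) :
    ∃ E : Set A, Even E.ncard ∧ Subtype.val ⁻¹' E = S := by
  by_cases hS : Even (Subtype.val '' S).ncard
  · exact ⟨_, hS, Set.preimage_image_eq S Subtype.val_injective⟩
  · have ha₀ : a₀ ∉ Subtype.val '' S := fun ⟨a, _, h⟩ => a.2 h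
    refine ⟨insert a₀ (Subtype.val '' S), ?_, ?_⟩
    · rw [Set.ncard_insert_of_notMem ha₀]
      exact (Nat.not_even_iff_odd.1 hS).add_one
    · ext ⟨a, ha⟩
      simp [ha]

theorem two_pow_pred_card_le_card_even (A : Type) [Fintype A] :
    2 ^ (Fintype.card A - 1) ≤ Nat.card {E : Set A // Even E.ncard} := by
  classical
  rcases isEmpty_or_nonempty A with _ | ⟨⟨a₀⟩⟩
  · have : Nonempty {E : Set A // Even E.ncard} := ⟨⟨∅, by simp⟩⟩
    rw [Fintype.card_eq_zero, zero_tsub, pow_zero]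
    exact Nat.card_pos
  · calc 2 ^ (Fintype.card A - 1) = Nat.card (Set {a // a ≠ a₀}) := by
          rw [Nat.card_eq_fintype_card, Fintype.card_set, Fintype.card_subtype_compl,
            Fintype.card_subtype_eq]
      _ ≤ Nat.card {E : Set A // Even E.ncard} :=
          Nat.card_le_card_of_surjective (fun E => Subtype.val ⁻¹' E.1) fun S => by
            obtain ⟨E, hE, rfl⟩ := exists_even_ncard_preimage_val a₀ S
            exact ⟨⟨E, hE⟩, rfl⟩

end

/-- There is a one-state acceptance automaton (whose transition
constraint consists of all sets of even cardinality) such that every DMTS with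
the same implementation set has at least `2^(n-1)` states, `n = |Σ|`. -/
theorem aa_to_dmts_blowup {A : Type} [Fintype A] (n : ℕ) (hn : Fintype.card A = n) :
    ∃ Aut : AA A Unit,
      Aut.init = {()} ∧
      (∀ u, Aut.Tran u = {M : Set (A × Unit) | Even M.ncard}) ∧
      (∀ u ∈ Aut.init, (Aut.Tran u).Nonempty) ∧
      ∀ (T : Type) [Fintype T] (D : DMTS A T), D.Consistent →
        (∀ (U : Type) [Fintype U] (I : LTS A U), D.Sat I ↔ Aut.Sat I) →
        2 ^ (n - 1) ≤ Fintype.card T := by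
  refine ⟨evenAA A, rfl, fun _ => rfl, fun _ _ => ⟨∅, by simp [evenAA]⟩, ?_⟩
  intro T _ D _ hiff
  have hsound : ∀ (U : Type) [Fintype U] (I : LTS A U), D.Sat I → (evenAA A).Sat I :=
    fun U _ I => (hiff U I).1
  have hhost (E : {E : Set A // Even E.ncard}) : ∃ t ∈ D.init, ∃ P, t ∈ P ∧ D.LoopClosed E P :=
    ((hiff Unit _).2 (evenAA_sat_loopLTS E.2)).exists_loopClosed
  choose f hf P hfP hP using hhost
  have hinj : Function.Injective f := fun E F h => Subtype.ext <| subset_antisymm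
    (D.subset_of_loopClosed hsound (hf F) (hP E) (hP F) (h ▸ hfP E) (hfP F) F.2)
    (D.subset_of_loopClosed hsound (hf E) (hP F) (hP E) (h ▸ hfP F) (hfP E) E.2)
  calc 2 ^ (n - 1) ≤ Nat.card {E : Set A // Even E.ncard} :=
        hn ▸ two_pow_pred_card_le_card_even A
    _ ≤ Nat.card T := Nat.card_le_card_of_injective f hinj
    _ = Fintype.card T := Nat.card_eq_fintype_card
end

section
/- For all acceptance automata A1 and A2 over a finite alphabet Σ: A1 ≤m A2 if and only if bl(A1) ≤m bl(A2), where bl is the translation from AA to L-expressions. -/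
open Set

/-!
The disjunct of `bl` for an acceptance set `M` is satisfied by `M` and by nothing else, so
`⟪Φ(s)⟫ = Tran(s)`: reading `bl(A)` back as an acceptance automaton gives `A` itself. Since modal
refinement of `L`-expressions is by definition modal refinement of these semantic automata, the two
refinement relations coincide.
-/

lemma mem_setList {α : Type} [Finite α] {s : Set α} {x : α} : x ∈ setList s ↔ x ∈ s := by
  simp [setList]

section LForm

variable {A X : Type}

lemma lsem_lor (φ ψ : LForm A X) : lsem (φ.lor ψ) = lsem φ ∪ lsem ψ := by
  simp [LForm.lor, lsem, compl_inter]

lemma mem_lsem_listOr {l : List (LForm A X)} {M : Set (A × X)} :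
    M ∈ lsem (listOr l) ↔ ∃ φ ∈ l, M ∈ lsem φ := by
  induction l with
  | nil => simp [listOr, lsem]
  | cons φ l ih => simp_all [listOr, lsem_lor]

lemma mem_lsem_listAnd {l : List (LForm A X)} {M : Set (A × X)} :
    M ∈ lsem (listAnd l) ↔ ∀ φ ∈ l, M ∈ lsem φ := by
  induction l with
  | nil => simp [listAnd, lsem]
  | cons φ l ih => simp_all [listAnd, lsem]

end LForm

noncomputable def acceptForm {A S : Type} [Finite A] [Finite S] (M : Set (A × S)) :
    LForm A S :=
  LForm.and (listAnd ((setList M).map fun p => LForm.dia p.1 p.2))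
    (listAnd ((setList Mᶜ).map fun p => LForm.neg (LForm.dia p.1 p.2)))

lemma lsem_acceptForm {A S : Type} [Finite A] [Finite S] (M : Set (A × S)) :
    lsem (acceptForm M) = {M} := by
  ext M'
  simp only [acceptForm, lsem, Set.mem_inter_iff, mem_lsem_listAnd, List.mem_map,
    mem_setList, forall_exists_index, and_imp, forall_apply_eq_imp_iff₂, Set.mem_ofPred_eq,
    Set.mem_compl_iff, Set.mem_singleton_iff]
  exact ⟨fun ⟨hsup, hsub⟩ => Set.Subset.antisymm (fun p hp => by_contra (hsub p · hp)) hsup,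
    fun h => h ▸ ⟨fun _ hp => hp, fun _ hp => hp⟩⟩

lemma bl_Phi {A S : Type} [Finite A] [Finite S] (Aut : AA A S) (s : S) :
    (bl Aut).Phi s = listOr ((setList (Aut.Tran s)).map acceptForm) :=
  rfl

lemma lsem_bl_Phi {A S : Type} [Finite A] [Finite S] (Aut : AA A S) (s : S) :
    lsem ((bl Aut).Phi s) = Aut.Tran s := by
  ext M
  simp [bl_Phi, mem_lsem_listOr, lsem_acceptForm, mem_setList]

lemma lb_bl {A S : Type} [Finite A] [Finite S] (Aut : AA A S) : lb (bl Aut) = Aut := by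
  simp only [lb, lsem_bl_Phi]
  rfl

lemma LExpr.refines_iff_lb_refines {A X1 X2 : Type} (E1 : LExpr A X1) (E2 : LExpr A X2) :
    E1.Refines E2 ↔ (lb E1).Refines (lb E2) :=
  Iff.rfl

theorem aa_refines_iff_bl_refines_general {A : Type} [Fintype A]
    {S1 S2 : Type} [Fintype S1] [Fintype S2]
    (A1 : AA A S1) (A2 : AA A S2) :
    A1.Refines A2 ↔ (bl A1).Refines (bl A2) := by
  rw [LExpr.refines_iff_lb_refines, lb_bl, lb_bl]

/-- `A1 ≤m A2` iff `bl(A1) ≤m bl(A2)`. -/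
theorem aa_refines_iff_bl_refines {A : Type} [Fintype A]
    {S1 S2 : Type} [Fintype S1] [Fintype S2]
    (A1 : AA A S1) (A2 : AA A S2)
    (h1 : ∀ s ∈ A1.init, (A1.Tran s).Nonempty)
    (h2 : ∀ s ∈ A2.init, (A2.Tran s).Nonempty) :
    A1.Refines A2 ↔ (bl A1).Refines (bl A2) :=
  aa_refines_iff_bl_refines_general A1 A2
end

section
/- Modal refinement is sound for acceptance automata and for L-expressions: for all AA A1, A2, A1 ≤m A2 implies ⟦A1⟧ ⊆ ⟦A2⟧; and for all L-expressions E1, E2, E1 ≤m E2 implies ⟦E1⟧ ⊆ ⟦E2⟧. -/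
open Set

/-! An implementation of `A1` is an LTS refining `A1`, and refinement relations compose, so
`I ≤m A1 ≤m A2` gives `I ≤m A2`. For `L`-expressions nothing new is needed: along `lb`,
their refinement and satisfaction are by definition those of acceptance automata. -/

open SetRel in
theorem IsAARef.comp {A S1 S2 S3 : Type} {T1 : S1 → Set (Set (A × S1))}
    {T2 : S2 → Set (Set (A × S2))} {T3 : S3 → Set (Set (A × S3))}
    {R : SetRel S1 S2} {R' : SetRel S2 S3}
    (h : IsAARef T1 T2 R) (h' : IsAARef T2 T3 R') : IsAARef T1 T3 (R ○ R') := by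
  rintro s1 s3 ⟨s2, hR, hR'⟩ M1 hM1
  obtain ⟨M2, hM2, forth12, back12⟩ := h s1 s2 hR M1 hM1
  obtain ⟨M3, hM3, forth23, back23⟩ := h' s2 s3 hR' M2 hM2
  refine ⟨M3, hM3, fun a t1 ht1 => ?_, fun a t3 ht3 => ?_⟩
  · obtain ⟨t2, ht2, hr⟩ := forth12 a t1 ht1
    obtain ⟨t3, ht3, hr'⟩ := forth23 a t2 ht2
    exact ⟨t3, ht3, mem_comp.2 ⟨t2, hr, hr'⟩⟩
  · obtain ⟨t2, ht2, hr'⟩ := back23 a t3 ht3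
    obtain ⟨t1, ht1, hr⟩ := back12 a t2 ht2
    exact ⟨t1, ht1, mem_comp.2 ⟨t2, hr, hr'⟩⟩

open SetRel in
theorem AA.Refines.trans {A S1 S2 S3 : Type} {A1 : AA A S1} {A2 : AA A S2} {A3 : AA A S3}
    (h12 : A1.Refines A2) (h23 : A2.Refines A3) : A1.Refines A3 := by
  obtain ⟨R, hR, hinit⟩ := h12
  obtain ⟨R', hR', hinit'⟩ := h23
  refine ⟨R ○ R', hR.comp hR', fun s1 hs1 => ?_⟩
  obtain ⟨s2, hs2, hr⟩ := hinit s1 hs1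
  obtain ⟨s3, hs3, hr'⟩ := hinit' s2 hs2
  exact ⟨s3, hs3, mem_comp.2 ⟨s2, hr, hr'⟩⟩

theorem AA.Sat.of_refines {A S1 S2 T : Type} {A1 : AA A S1} {A2 : AA A S2} {I : LTS A T}
    (hI : A1.Sat I) (h : A1.Refines A2) : A2.Sat I :=
  AA.Refines.trans hI h

theorem LExpr.refines_iff_lb {A X1 X2 : Type} {E1 : LExpr A X1} {E2 : LExpr A X2} :
    E1.Refines E2 ↔ (lb E1).Refines (lb E2) :=
  Iff.rfl

theorem LExpr.sat_iff_lb {A X T : Type} {E : LExpr A X} {I : LTS A T} :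
    E.Sat I ↔ (lb E).Sat I :=
  Iff.rfl

theorem aa_and_lexpr_refinement_sound_general {A : Type} :
    (∀ (S1 S2 : Type) [Fintype S1] [Fintype S2] (A1 : AA A S1) (A2 : AA A S2),
      (∀ s ∈ A1.init, (A1.Tran s).Nonempty) →
      (∀ s ∈ A2.init, (A2.Tran s).Nonempty) →
      A1.Refines A2 →
      ∀ (T : Type) [Fintype T] (I : LTS A T), A1.Sat I → A2.Sat I) ∧
    (∀ (X1 X2 : Type) [Fintype X1] [Fintype X2] (E1 : LExpr A X1) (E2 : LExpr A X2),
      E1.Refines E2 →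
      ∀ (T : Type) [Fintype T] (I : LTS A T), E1.Sat I → E2.Sat I) :=
  ⟨fun _ _ _ _ _ _ _ _ h _ _ _ hI => hI.of_refines h,
   fun _ _ _ _ _ _ h _ _ _ hI =>
    LExpr.sat_iff_lb.2 (LExpr.sat_iff_lb.1 hI |>.of_refines (LExpr.refines_iff_lb.1 h))⟩

/-- Modal refinement is sound for acceptance automata and for
`L`-expressions: refinement implies inclusion of implementation sets. -/
theorem aa_and_lexpr_refinement_sound {A : Type} [Fintype A] :
    (∀ (S1 S2 : Type) [Fintype S1] [Fintype S2] (A1 : AA A S1) (A2 : AA A S2),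
      (∀ s ∈ A1.init, (A1.Tran s).Nonempty) →
      (∀ s ∈ A2.init, (A2.Tran s).Nonempty) →
      A1.Refines A2 →
      ∀ (T : Type) [Fintype T] (I : LTS A T), A1.Sat I → A2.Sat I) ∧
    (∀ (X1 X2 : Type) [Fintype X1] [Fintype X2] (E1 : LExpr A X1) (E2 : LExpr A X2),
      E1.Refines E2 →
      ∀ (T : Type) [Fintype T] (I : LTS A T), E1.Sat I → E2.Sat I) :=
  aa_and_lexpr_refinement_sound_general
end

section
/- For any DMTS D over a finite alphabet Σ, the may-completion satisfies mc(D) = hdt(ddh(D)), i.e. the may-completion of D equals the result of translating D to a normal-form ν-calculus expression by ddh and back to a DMTS by the semantic translation hdt. -/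
open Set

/-! A modal refinement `R` of `I` into `D` gives the post-fixed point `x ↦ {t | (t, x) ∈ R}` of the
characteristic formulae `ddh D`, and conversely the greatest fixed point is itself a modal refinement.
Hence `I ⊨ ddh D` iff `I ≤m D`, the two thorough orders on states coincide, and `mc D` and
`hdt (ddh D)` are the same construction. -/

lemma nfGfp_ddh_of_isDMTSRef {A S T : Type} {D : DMTS A S} {I : LTS A T} {R : Set (T × S)}
    (hR : IsDMTSRef I.toDMTS D R) {t : T} {s : S} (hts : (t, s) ∈ R) :
    t ∈ nfGfp (ddh D) I s := by
  refine ⟨fun x => {t | (t, x) ∈ R}, fun x t htx => ⟨?_, ?_⟩, hts⟩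
  · intro N hN
    obtain ⟨N1, ⟨a, u, htu, rfl⟩, hN1⟩ := (hR t x htx).2 N hN
    obtain ⟨y, hy, huy⟩ := hN1 a u rfl
    exact ⟨(a, y), hy, u, htu, huy⟩
  · intro a t' htt'
    exact (hR t x htx).1 a t' htt'

lemma isDMTSRef_nfGfp_ddh {A S T : Type} (D : DMTS A S) (I : LTS A T) :
    IsDMTSRef I.toDMTS D {p | p.1 ∈ nfGfp (ddh D) I p.2} := by
  rintro t x ⟨σ, hσ, htx⟩
  obtain ⟨hdia, hbox⟩ := hσ x htx
  constructor
  · intro a t' htt'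
    obtain ⟨y, hy, ht'y⟩ := hbox a t' htt'
    exact ⟨y, hy, σ, hσ, ht'y⟩
  · intro N hN
    obtain ⟨⟨a, y⟩, hay, t', htt', ht'y⟩ := hdia N hN
    refine ⟨{(a, t')}, ⟨a, t', htt', rfl⟩, ?_⟩
    rintro b u ⟨rfl, rfl⟩
    exact ⟨y, hay, σ, hσ, ht'y⟩

theorem DMTS.sat_iff_models_ddh {A S T : Type} (D : DMTS A S) (I : LTS A T) :
    D.Sat I ↔ (ddh D).Models I := by
  constructor
  · rintro ⟨R, hR, hinit⟩ t ht
    obtain ⟨s, hs, hts⟩ := hinit t ht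
    exact ⟨s, hs, nfGfp_ddh_of_isDMTSRef hR hts⟩
  · exact fun h => ⟨_, isDMTSRef_nfGfp_ddh D I, h⟩

theorem DMTS.stateThLe_iff_varThLe_ddh {A S : Type} (D : DMTS A S) (t' t : S) :
    D.stateThLe t' t ↔ (ddh D).varThLe t' t :=
  forall₂_congr fun _ _ => forall_congr' fun I =>
    imp_congr ((D.atState t').sat_iff_models_ddh I) ((D.atState t).sat_iff_models_ddh I)

theorem mc_eq_hdt_ddh_general {A : Type} {S : Type}
    (D : DMTS A S) :
    D.mc = hdt (ddh D) := by
  simp only [DMTS.mc, hdt, DMTS.stateThLe_iff_varThLe_ddh]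
  rfl

/-- `mc(D) = hdt(ddh(D))` for any DMTS `D`. -/
theorem mc_eq_hdt_ddh {A : Type} [Fintype A] {S : Type} [Fintype S]
    (D : DMTS A S) (hc : D.Consistent) :
    D.mc = hdt (ddh D) :=
  mc_eq_hdt_ddh_general D
end

section
/- For all ν-calculus expressions N1 and N2 in normal form over a finite alphabet Σ: N1 ≤m N2 (ν-calculus modal refinement) if and only if hd(N1) ≤m hd(N2) (DMTS modal refinement), where hd is the syntactic translation from normal-form ν-calculus expressions to DMTS given by hd(X, X⁰, Δ) = (X, X⁰, →◇, →□) with →◇ = {(x,a,y) : y ∈ □ᵃ(x)} and →□ = {(x,N) : N ∈ ◇(x)}. -/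
open Set

theorem isNFRef_iff_isDMTSRef_hd {A X1 X2 : Type} (n1 : NF A X1) (n2 : NF A X2)
    (R : Set (X1 × X2)) : IsNFRef n1 n2 R ↔ IsDMTSRef (hd n1) (hd n2) R :=
  Iff.rfl

theorem nf_refines_iff_hd_refines_general {A : Type}
    {X1 X2 : Type}
    (N1 : NF A X1) (N2 : NF A X2) :
    N1.Refines N2 ↔ (hd N1).Refines (hd N2) :=
  exists_congr fun R => and_congr_left' (isNFRef_iff_isDMTSRef_hd N1 N2 R)

/-- `N1 ≤m N2` (ν-calculus modal refinement) iff
`hd(N1) ≤m hd(N2)` (DMTS modal refinement). -/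
theorem nf_refines_iff_hd_refines {A : Type} [Fintype A]
    {X1 X2 : Type} [Fintype X1] [Fintype X2]
    (N1 : NF A X1) (N2 : NF A X2) :
    N1.Refines N2 ↔ (hd N1).Refines (hd N2) :=
  nf_refines_iff_hd_refines_general N1 N2
end
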